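/- Let u_1, …, u_m ∈ ℤ^d and let n_1, …, n_m be positive integers. Let β : ℤ^m → ℤ^d be the homomorphism with β(e_j) = n_j·u_j and β₀ : ℤ^m → ℤ^d the homomorphism with β₀(e_j) = u_j. Let n̄ : (ℝ/ℤ)^m → (ℝ/ℤ)^m be the homomorphism [(x_1, …, x_m)] ↦ [(n_1 x_1, …, n_m x_m)]. Then n̄ maps the subgroup ker β̄ onto the subgroup ker β̄₀, and the kernel Γ of the restricted homomorphism n̄ : ker β̄ → ker β̄₀ is a finite group. -/

import Mathlib

/-- The homomorphism of tori `(ℝ/ℤ)^m → (ℝ/ℤ)^d` induced by the homomorphism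
`ℤ^m → ℤ^d` sending `e_j ↦ v j`. -/
noncomputable def torusHom {m d : ℕ} (v : Fin m → (Fin d → ℤ)) :
    (Fin m → AddCircle (1 : ℝ)) →+ (Fin d → AddCircle (1 : ℝ)) :=
  AddMonoidHom.mk' (fun x i => ∑ j, v j i • x j) (by
    intro x y
    funext i
    simp [smul_add, Finset.sum_add_distrib])

/-- The homomorphism `n̄ : (ℝ/ℤ)^m → (ℝ/ℤ)^m`, `[(x_1,…,x_m)] ↦ [(n_1 x_1,…,n_m x_m)]`. -/
noncomputable def nBar {m : ℕ} (n : Fin m → ℕ) :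
    (Fin m → AddCircle (1 : ℝ)) →+ (Fin m → AddCircle (1 : ℝ)) :=
  AddMonoidHom.mk' (fun x j => ((n j : ℤ)) • x j) (by
    intro x y
    funext j
    simp [smul_add])

/-!
Since `β̄ = β̄₀ ∘ n̄`, the kernel of `β̄` is the preimage of `ker β̄₀` under `n̄`, and `n̄` is
surjective because the circle is divisible; hence `n̄ (ker β̄) = ker β̄₀`. The kernel `Γ` lies in
`ker n̄`, a product of the finite `n_j`-torsion subgroups of the circle.
-/

lemma torusHom_smul_eq_comp_nBar {m d : ℕ} (u : Fin m → (Fin d → ℤ)) (n : Fin m → ℕ) :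
    (torusHom fun j => (n j : ℤ) • u j) = (torusHom u).comp (nBar n) := by
  ext x i
  simp only [torusHom, nBar, AddMonoidHom.comp_apply, AddMonoidHom.mk'_apply]
  refine Finset.sum_congr rfl fun j _ => ?_
  rw [Pi.smul_apply, smul_eq_mul, mul_comm, mul_smul]

lemma nBar_surjective {m : ℕ} {n : Fin m → ℕ} (hn : ∀ j, 0 < n j) :
    Function.Surjective (nBar n) := fun y =>
  ⟨fun j => DivisibleBy.div (y j) (n j : ℤ),
    funext fun j => DivisibleBy.div_cancel (y j) (by exact_mod_cast (hn j).ne')⟩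

lemma finite_ker_nBar {m : ℕ} {n : Fin m → ℕ} (hn : ∀ j, 0 < n j) :
    ((nBar n).ker : Set (Fin m → AddCircle (1 : ℝ))).Finite := by
  refine (Set.Finite.pi fun j => AddCircle.finite_torsion (1 : ℝ) (hn j)).subset ?_
  intro x hx j _
  simpa [nBar, natCast_zsmul] using congrFun (show nBar n x = 0 from hx) j

/-- Let `β(e_j) = n_j • u_j` and `β₀(e_j) = u_j` with `n_j > 0`.  Then
`n̄ : [(x_j)] ↦ [(n_j x_j)]` maps `ker β̄` onto `ker β̄₀`, and the kernel `Γ` of the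
restricted homomorphism `n̄ : ker β̄ → ker β̄₀` (i.e. `ker β̄ ⊓ ker n̄`) is a finite
group. -/
theorem nBar_maps_ker_onto_and_finite_kernel {m d : ℕ}
    (u : Fin m → (Fin d → ℤ)) (n : Fin m → ℕ) (hn : ∀ j, 0 < n j) :
    AddSubgroup.map (nBar n) (torusHom fun j => (n j : ℤ) • u j).ker
        = (torusHom u).ker ∧
      Finite ((torusHom fun j => (n j : ℤ) • u j).ker ⊓ (nBar n).ker :
        AddSubgroup (Fin m → AddCircle (1 : ℝ))) := by
  constructor
  · rw [torusHom_smul_eq_comp_nBar, ← AddMonoidHom.comap_ker]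
    exact AddSubgroup.map_comap_eq_self_of_surjective (nBar_surjective hn) _
  · exact ((finite_ker_nBar hn).subset inf_le_right).to_subtype
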